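/- arXiv:1709.07998 — 2 statements merged into one kernel-verified Lean document; each statement's English description precedes it below -/
import Mathlib

section
/- Let X be a space, κ an infinite cardinal with wt(X) ≤ κ, and 𝒞 a cover of X witnessing wt(X) ≤ κ (i.e., |𝒞| ≤ 2^κ, each C ∈ 𝒞 has t(C) ≤ κ, and X = cl_{2^κ}(C) for each C ∈ 𝒞). If 𝓑 is an increasing chain of κ⁺-many 𝒞-saturated subsets of X, then closure(⋃𝓑) = ⋃_{B∈𝓑} closure(B). -/
open Cardinal Set TopologicalSpace

universe u

/-- The tightness `t(X)`: the least infinite cardinal `κ` such that whenever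
`x ∈ closure A` there is `B ⊆ A` with `#B ≤ κ` and `x ∈ closure B`. -/
noncomputable def tightness (X : Type u) [TopologicalSpace X] : Cardinal.{u} :=
  sInf {κ : Cardinal.{u} | ℵ₀ ≤ κ ∧ ∀ (A : Set X) (x : X), x ∈ closure A →
    ∃ B ⊆ A, #B ≤ κ ∧ x ∈ closure B}

/-- The `κ`-closure of a set `A`. -/
noncomputable def clk {X : Type u} [TopologicalSpace X] (κ : Cardinal.{u}) (A : Set X) : Set X :=
  ⋃ (B : Set X) (_ : B ⊆ A ∧ #B ≤ κ), closure B

/-- A cover `𝒞` witnessing that `wt X ≤ κ`. -/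
noncomputable def IsWtWitness {X : Type u} [TopologicalSpace X] (κ : Cardinal.{u}) (𝒞 : Set (Set X)) : Prop :=
  ⋃₀ 𝒞 = Set.univ ∧ #𝒞 ≤ 2 ^ κ ∧ ∀ C ∈ 𝒞, tightness ↥C ≤ κ ∧ clk (2 ^ κ) C = Set.univ

/-- The weak tightness `wt(X)`. -/
noncomputable def wt (X : Type u) [TopologicalSpace X] : Cardinal.{u} :=
  sInf {κ : Cardinal.{u} | ℵ₀ ≤ κ ∧ ∃ 𝒞 : Set (Set X), IsWtWitness κ 𝒞}

/-- The Lindelöf number `L(X)`. -/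
noncomputable def LindelofNumber (X : Type u) [TopologicalSpace X] : Cardinal.{u} :=
  sInf {κ : Cardinal.{u} | ℵ₀ ≤ κ ∧ ∀ 𝒰 : Set (Set X), (∀ U ∈ 𝒰, IsOpen U) →
    ⋃₀ 𝒰 = Set.univ → ∃ 𝒱 ⊆ 𝒰, #𝒱 ≤ κ ∧ ⋃₀ 𝒱 = Set.univ}

/-- The pseudocharacter `ψ(X)`. -/
noncomputable def psi (X : Type u) [TopologicalSpace X] : Cardinal.{u} :=
  sInf {κ : Cardinal.{u} | ℵ₀ ≤ κ ∧ ∀ x : X, ∃ 𝒰 : Set (Set X),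
    #𝒰 ≤ κ ∧ (∀ U ∈ 𝒰, IsOpen U ∧ x ∈ U) ∧ ⋂₀ 𝒰 = {x}}

/-- The closed pseudocharacter `ψ_c(X)`. -/
noncomputable def psic (X : Type u) [TopologicalSpace X] : Cardinal.{u} :=
  sInf {κ : Cardinal.{u} | ℵ₀ ≤ κ ∧ ∀ x : X, ∃ 𝒰 : Set (Set X),
    #𝒰 ≤ κ ∧ (∀ U ∈ 𝒰, IsOpen U ∧ x ∈ U) ∧ (⋂ U ∈ 𝒰, closure U) = {x}}

/-- `A` is `𝒞`-saturated: `A ∩ C` is dense in `A` for every `C ∈ 𝒞`. -/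
noncomputable def Saturated {X : Type u} [TopologicalSpace X] (𝒞 : Set (Set X)) (A : Set X) : Prop :=
  ∀ C ∈ 𝒞, A ⊆ closure (A ∩ C)

/-- The π-character `πχ(x, X)` of a point: least cardinality of a local π-base at `x`. -/
noncomputable def piCharPt {X : Type u} [TopologicalSpace X] (x : X) : Cardinal.{u} :=
  sInf {κ : Cardinal.{u} | ∃ ℬ : Set (Set X), #ℬ ≤ κ ∧
    (∀ B ∈ ℬ, IsOpen B ∧ B.Nonempty) ∧ ∀ U : Set X, IsOpen U → x ∈ U → ∃ B ∈ ℬ, B ⊆ U}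

/-- The π-character `πχ(X)`. -/
noncomputable def piChar (X : Type u) [TopologicalSpace X] : Cardinal.{u} :=
  ⨆ x : X, piCharPt x

/-- The character `χ(x, X)` of a point: least cardinality of a local base at `x`. -/
noncomputable def charPt {X : Type u} [TopologicalSpace X] (x : X) : Cardinal.{u} :=
  sInf {κ : Cardinal.{u} | ∃ ℬ : Set (Set X), #ℬ ≤ κ ∧
    (∀ B ∈ ℬ, IsOpen B ∧ x ∈ B) ∧ ∀ U : Set X, IsOpen U → x ∈ U → ∃ B ∈ ℬ, B ⊆ U}

/-- The character `χ(X)`. -/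
noncomputable def character (X : Type u) [TopologicalSpace X] : Cardinal.{u} :=
  ⨆ x : X, charPt x

/-- The density `d(X)`: least cardinality of a dense subset. -/
noncomputable def density (X : Type u) [TopologicalSpace X] : Cardinal.{u} :=
  sInf {κ : Cardinal.{u} | ∃ D : Set X, Dense D ∧ #D ≤ κ}

/-- A space is homogeneous if its homeomorphism group acts transitively. -/
noncomputable def Homogeneous (X : Type u) [TopologicalSpace X] : Prop :=
  ∀ x y : X, ∃ h : X ≃ₜ X, h x = y

/-- A space is power homogeneous if some (nonempty) power of it is homogeneous. -/
noncomputable def PowerHomogeneous (X : Type u) [TopologicalSpace X] : Prop :=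
  ∃ I : Type u, Nonempty I ∧ Homogeneous (I → X)

/-- A `G^c_κ`-set: `G = ⋂𝒰 = ⋂_{U ∈ 𝒰} closure U` for a family `𝒰` of `≤ κ` open sets. -/
noncomputable def GcSet {X : Type u} [TopologicalSpace X] (κ : Cardinal.{u}) (G : Set X) : Prop :=
  ∃ 𝒰 : Set (Set X), #𝒰 ≤ κ ∧ (∀ U ∈ 𝒰, IsOpen U) ∧
    G = ⋂₀ 𝒰 ∧ G = ⋂ U ∈ 𝒰, closure U

/-- A subset is subseparable if it is contained in the closure of a countable set. -/
noncomputable def Subseparable {X : Type u} [TopologicalSpace X] (A : Set X) : Prop :=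
  ∃ c : Set X, c.Countable ∧ A ⊆ closure c

/-!
Every point of `closure (⋃ i, B i)` lies in some `C ∈ 𝒞`; saturation puts it in the closure of
`⋃ i, B i ∩ C ⊆ C`, so tightness of `C` gives a subset `T` of size `≤ κ` with `x ∈ closure T`.
By regularity of `κ⁺`, the indices of the members of `T` are bounded, so `T` lies in a single
`B j` and `x ∈ closure (B j)`.
-/

lemma exists_subset_mk_le_tightness_of_mem_closure {X : Type u} [TopologicalSpace X]
    {A : Set X} {x : X} (hx : x ∈ closure A) :
    ∃ B ⊆ A, #B ≤ tightness X ∧ x ∈ closure B := by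
  have hne : {κ : Cardinal.{u} | ℵ₀ ≤ κ ∧ ∀ (A : Set X) (x : X), x ∈ closure A →
      ∃ B ⊆ A, #B ≤ κ ∧ x ∈ closure B}.Nonempty :=
    ⟨max ℵ₀ #X, le_max_left _ _, fun A x hx =>
      ⟨A, le_rfl, (mk_set_le A).trans (le_max_right _ _), hx⟩⟩
  exact (csInf_mem hne).2 A x hx

lemma exists_subset_mk_le_of_mem_closure_of_tightness_le {X : Type u} [TopologicalSpace X]
    {κ : Cardinal.{u}} {C S : Set X} (hCκ : tightness C ≤ κ) (hSC : S ⊆ C) {x : X}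
    (hxC : x ∈ C) (hxS : x ∈ closure S) :
    ∃ T ⊆ S, #T ≤ κ ∧ x ∈ closure T := by
  have hx' : (⟨x, hxC⟩ : C) ∈ closure ((↑) ⁻¹' S : Set C) := by
    rwa [closure_subtype, Subtype.image_preimage_coe, inter_eq_right.mpr hSC]
  obtain ⟨T, hTS, hTκ, hxT⟩ := exists_subset_mk_le_tightness_of_mem_closure hx'
  exact ⟨(↑) '' T, by simpa using hTS, mk_image_le.trans (hTκ.trans hCκ),
    image_closure_subset_closure_image continuous_subtype_val (mem_image_of_mem _ hxT)⟩

lemma closure_iUnion_subset_closure_iUnion_inter {X : Type*} [TopologicalSpace X]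
    {ι : Sort*} {B : ι → Set X} {C : Set X} (hB : ∀ i, B i ⊆ closure (B i ∩ C)) :
    closure (⋃ i, B i) ⊆ closure (⋃ i, B i ∩ C) :=
  closure_minimal
    (iUnion_subset fun i => (hB i).trans (closure_mono (subset_iUnion (fun i => B i ∩ C) i)))
    isClosed_closure

lemma exists_subset_of_subset_iUnion_of_isRegular {X : Type u} {c : Cardinal.{u}}
    (hc : c.IsRegular) {B : {i : Ordinal.{u} // i < c.ord} → Set X} (hB : Monotone B)
    {T : Set X} (hT : #T < c) (hTB : T ⊆ ⋃ i, B i) :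
    ∃ j, T ⊆ B j := by
  have hidx : ∀ t : T, ∃ i, (t : X) ∈ B i := fun t => mem_iUnion.mp (hTB t.2)
  choose f hf using hidx
  have hsup : (⨆ t, (f t : Ordinal)) < c.ord :=
    Ordinal.iSup_lt_of_lt_cof (by rwa [hc.cof_ord]) fun t => (f t).2
  refine ⟨⟨_, hsup⟩, fun t ht => hB ?_ (hf ⟨t, ht⟩)⟩
  exact Subtype.coe_le_coe.mp (le_ciSup Ordinal.bddAbove_of_small (⟨t, ht⟩ : T))

theorem stmt2_general {X : Type u} [TopologicalSpace X] (κ : Cardinal.{u}) (hκ : ℵ₀ ≤ κ)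
    (𝒞 : Set (Set X)) (hC : IsWtWitness κ 𝒞)
    (B : {i : Ordinal.{u} // i < (Order.succ κ).ord} → Set X)
    (hmono : Monotone B) (hsat : ∀ i, Saturated 𝒞 (B i)) :
    closure (⋃ i, B i) = ⋃ i, closure (B i) := by
  refine Subset.antisymm (fun x hx => ?_) (iUnion_subset fun i => closure_mono (subset_iUnion B i))
  obtain ⟨hcover, -, htight⟩ := hC
  obtain ⟨C, hC𝒞, hxC⟩ := mem_sUnion.mp (hcover ▸ mem_univ x : x ∈ ⋃₀ 𝒞)
  have hxS : x ∈ closure (⋃ i, B i ∩ C) :=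
    closure_iUnion_subset_closure_iUnion_inter (fun i => hsat i C hC𝒞) hx
  obtain ⟨T, hTS, hTκ, hxT⟩ := exists_subset_mk_le_of_mem_closure_of_tightness_le
    (htight C hC𝒞).1 (iUnion_subset fun i => inter_subset_right) hxC hxS
  obtain ⟨j, hTj⟩ := exists_subset_of_subset_iUnion_of_isRegular (isRegular_succ hκ) hmono
    (hTκ.trans_lt (Order.lt_succ κ)) (hTS.trans (iUnion_mono fun i => inter_subset_left))
  exact mem_iUnion.mpr ⟨j, closure_mono hTj hxT⟩

/-- Lemma 2.7: increasing chains of `κ⁺`-many `𝒞`-saturated sets,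
indexed by the ordinals below `(κ⁺).ord`. -/
theorem stmt2 {X : Type u} [TopologicalSpace X] (κ : Cardinal.{u}) (hκ : ℵ₀ ≤ κ)
    (hwt : wt X ≤ κ) (𝒞 : Set (Set X)) (hC : IsWtWitness κ 𝒞)
    (B : {i : Ordinal.{u} // i < (Order.succ κ).ord} → Set X)
    (hmono : Monotone B) (hsat : ∀ i, Saturated 𝒞 (B i)) :
    closure (⋃ i, B i) = ⋃ i, closure (B i) :=
  stmt2_general κ hκ 𝒞 hC B hmono hsat
end

section
/- Let X be a space, D ⊆ X, κ an infinite cardinal with wt(X) ≤ κ, and let 𝒢 be a cover of closure(D) consisting of G^c_κ-sets of X. Then there exists 𝒢' ⊆ 𝒢 with |𝒢'| ≤ |D|^κ covering closure(D). -/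
open Cardinal Set TopologicalSpace

universe u

/-! A witness `𝒞` for `wt X ≤ κ` lets one enlarge `D` to a set
`D'` with `|D'| ≤ |D|^κ` that meets every `C ∈ 𝒞` densely; points of `closure D'` are then in the
closure of `κ`-small subsets `B ⊆ D'`, because some `C ∈ 𝒞` containing the point has tightness
`≤ κ`. If `x ∈ G = ⋂ 𝒰` with `G` a `G^c_κ`-set, the traces `U ∩ B`, `U ∈ 𝒰`, still have `x` in
their closures, while the intersection of these closures lies in `⋂ closure U = G`. So one member
of `𝒢` per `κ`-family of `κ`-subsets of `D'` suffices, and there are at most `|D|^κ` of those.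
For finite `D` the argument is not needed: `G^c_κ`-sets are closed. -/

section SetTheory

variable {α : Type u}

theorem exists_superset_closed_under_mk_le {μ : Cardinal.{u}} (hμ : ℵ₀ ≤ μ) (R : α → Set α)
    (hR : ∀ a, #(R a) ≤ μ) (A : Set α) :
    ∃ A', A ⊆ A' ∧ (∀ a ∈ A', R a ⊆ A') ∧ #A' ≤ max #A μ := by
  set ν := max #A μ
  have hν : ℵ₀ ≤ ν := le_max_of_le_right hμ
  let step : Set α → Set α := fun B => B ∪ ⋃ a ∈ B, R a
  have hstep : ∀ B : Set α, #B ≤ ν → #(step B) ≤ ν := fun B hB =>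
    calc #(step B) ≤ #B + #B * ⨆ a : B, #(R a) :=
          (mk_union_le _ _).trans (add_le_add_right (mk_biUnion_le _ _) _)
      _ ≤ ν + ν * ν := by gcongr; exact ciSup_le' fun a => (hR a).trans (le_max_right _ _)
      _ = ν := by rw [mul_eq_self hν, add_eq_self hν]
  let F : ℕ → Set α := fun n => step^[n] A
  have hF_succ : ∀ n, F (n + 1) = step (F n) := fun n => Function.iterate_succ_apply' step n A
  have hF : ∀ n, #(F n) ≤ ν := fun n => by
    induction n with
    | zero => exact le_max_left _ _
    | succ n ih => rw [hF_succ]; exact hstep _ ih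
  refine ⟨⋃ n, F n, subset_iUnion F 0, fun a ha => ?_, ?_⟩
  · obtain ⟨n, hn⟩ := mem_iUnion.1 ha
    calc R a ⊆ step (F n) := (subset_biUnion_of_mem hn).trans subset_union_right
      _ ⊆ ⋃ n, F n := hF_succ n ▸ subset_iUnion F (n + 1)
  · have h := mk_iUnion_le_lift F
    rw [lift_uzero, mk_nat, lift_aleph0] at h
    refine h.trans ?_
    calc ℵ₀ * ⨆ n, lift.{0} #(F n) ≤ ℵ₀ * ν := by
          gcongr; exact ciSup_le' fun n => by simpa using hF n
      _ = ν := aleph0_mul_eq hν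

theorem mk_setOf_subset_mk_le_le {A : Set α} {κ ν : Cardinal.{u}} (hA : #A ≤ ν) (hν : ℵ₀ ≤ ν)
    (hνκ : ν ^ κ = ν) : #{S | S ⊆ A ∧ #S ≤ κ} ≤ ν :=
  calc #{S | S ⊆ A ∧ #S ≤ κ} ≤ max #A ℵ₀ ^ κ := mk_bounded_subset_le A κ
    _ ≤ ν ^ κ := power_le_power_right (max_le hA hν)
    _ = ν := hνκ

theorem exists_subfamily_covering_of_refinement {ι : Type u} (P : ι → Set α) {𝒢 : Set (Set α)}
    {K : Set α} (h : ∀ x ∈ K, ∃ i, x ∈ P i ∧ ∃ G ∈ 𝒢, P i ⊆ G) :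
    ∃ 𝒢' ⊆ 𝒢, #𝒢' ≤ #ι ∧ K ⊆ ⋃₀ 𝒢' := by
  choose! g hg𝒢 hPg using fun i (hi : ∃ G ∈ 𝒢, P i ⊆ G) => hi
  refine ⟨g '' {i | ∃ G ∈ 𝒢, P i ⊆ G}, image_subset_iff.2 hg𝒢,
    mk_image_le.trans (mk_set_le _), fun x hx => ?_⟩
  obtain ⟨i, hxi, hi⟩ := h x hx
  exact ⟨g i, mem_image_of_mem g hi, hPg i hi hxi⟩

end SetTheory

section Topology

variable {X : Type u} [TopologicalSpace X]

theorem Set.Finite.exists_subfamily_covering_closure {D : Set X} (hD : D.Finite)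
    {𝒢 : Set (Set X)} (h𝒢 : ∀ G ∈ 𝒢, IsClosed G) (hcov : D ⊆ ⋃₀ 𝒢) :
    ∃ 𝒢' ⊆ 𝒢, #𝒢' ≤ #D ∧ closure D ⊆ ⋃₀ 𝒢' := by
  choose g hg𝒢 hdg using fun d : D => hcov d.2
  have : Finite D := hD
  refine ⟨range g, range_subset_iff.2 hg𝒢, mk_range_le, closure_minimal ?_ ?_⟩
  · exact fun d hd => ⟨g ⟨d, hd⟩, mem_range_self _, hdg ⟨d, hd⟩⟩
  · exact sUnion_range g ▸ isClosed_iUnion_of_finite fun d => h𝒢 _ (hg𝒢 d)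

theorem mem_clk_iff {κ : Cardinal.{u}} {A : Set X} {x : X} :
    x ∈ clk κ A ↔ ∃ B ⊆ A, #B ≤ κ ∧ x ∈ closure B := by
  simp only [clk, mem_iUnion, exists_prop, and_assoc]

theorem clk_mono {κ₁ κ₂ : Cardinal.{u}} (h : κ₁ ≤ κ₂) (A : Set X) : clk κ₁ A ⊆ clk κ₂ A :=
  fun _ hx =>
    let ⟨B, hBA, hB, hxB⟩ := mem_clk_iff.1 hx
    mem_clk_iff.2 ⟨B, hBA, hB.trans h, hxB⟩

theorem tightness_le_mk_add_aleph0 : tightness X ≤ #X + ℵ₀ := by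
  rw [tightness]
  exact csInf_le' ⟨self_le_add_left _ _, fun A _ hx =>
    ⟨A, subset_rfl, (mk_set_le A).trans (self_le_add_right _ _), hx⟩⟩

theorem exists_subset_mk_le_of_tightness_le {κ : Cardinal.{u}} (h : tightness X ≤ κ)
    {A : Set X} {x : X} (hx : x ∈ closure A) : ∃ B ⊆ A, #B ≤ κ ∧ x ∈ closure B := by
  obtain ⟨-, htight⟩ : tightness X ∈ _ := csInf_mem ⟨#X + ℵ₀, self_le_add_left _ _, fun A _ hx =>
      ⟨A, subset_rfl, (mk_set_le A).trans (self_le_add_right _ _), hx⟩⟩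
  obtain ⟨B, hBA, hB, hxB⟩ := htight A x hx
  exact ⟨B, hBA, hB.trans h, hxB⟩

namespace IsWtWitness

variable {κ : Cardinal.{u}} {𝒞 : Set (Set X)}

theorem mono {κ' : Cardinal.{u}} (hw : IsWtWitness κ 𝒞) (h : κ ≤ κ') : IsWtWitness κ' 𝒞 := by
  obtain ⟨hcov, hcard, hC⟩ := hw
  have h2 : (2 : Cardinal.{u}) ^ κ ≤ 2 ^ κ' := power_le_power_left two_ne_zero h
  refine ⟨hcov, hcard.trans h2, fun C hC𝒞 => ⟨(hC C hC𝒞).1.trans h, ?_⟩⟩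
  exact univ_subset_iff.1 ((hC C hC𝒞).2 ▸ clk_mono h2 C)

theorem univ_singleton : IsWtWitness (#X + ℵ₀) {(univ : Set X)} := by
  have hX : #X ≤ 2 ^ (#X + ℵ₀) := (self_le_add_right _ _).trans (cantor _).le
  refine ⟨sUnion_singleton _, ?_, fun C hC => ?_⟩
  · rw [mk_singleton]
    exact Cardinal.one_le_iff_ne_zero.2 (power_ne_zero _ two_ne_zero)
  · rw [mem_singleton_iff.1 hC]
    refine ⟨mk_univ (α := X) ▸ tightness_le_mk_add_aleph0, eq_univ_of_forall fun x => ?_⟩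
    exact mem_clk_iff.2 ⟨univ, subset_rfl, mk_univ.trans_le hX, by simp⟩

theorem exists_saturated_superset (hw : IsWtWitness κ 𝒞) (hκ : ℵ₀ ≤ κ) (A : Set X) :
    ∃ A', A ⊆ A' ∧ Saturated 𝒞 A' ∧ #A' ≤ max #A (2 ^ κ) := by
  have h2κ : ℵ₀ ≤ 2 ^ κ := hκ.trans (cantor κ).le
  choose E hEC hE haE using fun (a : X) (C : 𝒞) =>
    mem_clk_iff.1 ((hw.2.2 C C.2).2.symm ▸ mem_univ a : a ∈ clk (2 ^ κ) C)
  have hR : ∀ a, #(⋃ C, E a C) ≤ 2 ^ κ := fun a =>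
    calc #(⋃ C, E a C) ≤ #𝒞 * ⨆ C, #(E a C) := mk_iUnion_le _
      _ ≤ 2 ^ κ * 2 ^ κ := mul_le_mul' hw.2.1 (ciSup_le' (hE a))
      _ = 2 ^ κ := mul_eq_self h2κ
  obtain ⟨A', hAA', hA'E, hA'⟩ := exists_superset_closed_under_mk_le h2κ _ hR A
  refine ⟨A', hAA', fun C hC a ha => closure_mono ?_ (haE a ⟨C, hC⟩), hA'⟩
  exact subset_inter ((subset_iUnion (E a) ⟨C, hC⟩).trans (hA'E a ha)) (hEC a ⟨C, hC⟩)

theorem exists_subset_mk_le_of_saturated (hw : IsWtWitness κ 𝒞) {A : Set X}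
    (hA : Saturated 𝒞 A) {x : X} (hx : x ∈ closure A) : ∃ B ⊆ A, #B ≤ κ ∧ x ∈ closure B := by
  obtain ⟨C, hC, hxC⟩ : x ∈ ⋃₀ 𝒞 := hw.1 ▸ mem_univ x
  have hxAC : (⟨x, hxC⟩ : C) ∈ closure (Subtype.val ⁻¹' A : Set C) := by
    rw [closure_subtype, Subtype.image_preimage_coe, inter_comm]
    exact closure_minimal (hA C hC) isClosed_closure hx
  obtain ⟨B, hBA, hB, hxB⟩ := exists_subset_mk_le_of_tightness_le (hw.2.2 C hC).1 hxAC
  exact ⟨Subtype.val '' B, image_subset_iff.2 hBA, mk_image_le.trans hB, closure_subtype.1 hxB⟩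

end IsWtWitness

theorem exists_isWtWitness_of_wt_le {κ : Cardinal.{u}} (hwt : wt X ≤ κ) :
    ∃ 𝒞 : Set (Set X), IsWtWitness κ 𝒞 := by
  obtain ⟨-, 𝒞, hw⟩ : wt X ∈ _ :=
    csInf_mem ⟨_, self_le_add_left _ _, _, IsWtWitness.univ_singleton⟩
  exact ⟨𝒞, hw.mono hwt⟩

namespace GcSet

variable {κ : Cardinal.{u}} {G : Set X}

theorem isClosed (hG : GcSet κ G) : IsClosed G := by
  obtain ⟨𝒰, -, -, -, hG⟩ := hG
  exact hG ▸ isClosed_biInter fun _ _ => isClosed_closure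

theorem exists_traces (hG : GcSet κ G) {B : Set X} {x : X} (hxG : x ∈ G) (hxB : x ∈ closure B) :
    ∃ 𝒮 : Set (Set X), #𝒮 ≤ κ ∧ (∀ S ∈ 𝒮, S ⊆ B) ∧
      x ∈ (⋂ S ∈ 𝒮, closure S) ∧ (⋂ S ∈ 𝒮, closure S) ⊆ G := by
  obtain ⟨𝒰, h𝒰, hopen, hG₀, hG⟩ := hG
  have hxU : ∀ U ∈ 𝒰, x ∈ U := fun U hU => (hG₀ ▸ hxG : x ∈ ⋂₀ 𝒰) U hU
  refine ⟨(· ∩ B) '' 𝒰, mk_image_le.trans h𝒰, ?_, ?_, ?_⟩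
  · exact forall_mem_image.2 fun _ _ => inter_subset_right
  · exact mem_iInter₂.2 <| forall_mem_image.2 fun U hU => (hopen U hU).inter_closure ⟨hxU U hU, hxB⟩
  · rw [hG, biInter_image]
    exact iInter₂_mono fun U _ => closure_mono inter_subset_left

end GcSet

theorem IsWtWitness.exists_subfamily_covering {κ : Cardinal.{u}} {𝒞 : Set (Set X)}
    (hw : IsWtWitness κ 𝒞) {A K : Set X} (hA : Saturated 𝒞 A) (hK : K ⊆ closure A)
    {𝒢 : Set (Set X)} (hG : ∀ G ∈ 𝒢, GcSet κ G) (hcov : K ⊆ ⋃₀ 𝒢) :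
    ∃ 𝒢' ⊆ 𝒢, #𝒢' ≤ #{𝒮 | 𝒮 ⊆ {S | S ⊆ A ∧ #S ≤ κ} ∧ #𝒮 ≤ κ} ∧ K ⊆ ⋃₀ 𝒢' := by
  refine exists_subfamily_covering_of_refinement (fun 𝒮 => ⋂ S ∈ 𝒮.1, closure S) fun x hx => ?_
  obtain ⟨G, hG𝒢, hxG⟩ := hcov hx
  obtain ⟨B, hBA, hB, hxB⟩ := hw.exists_subset_mk_le_of_saturated hA (hK hx)
  obtain ⟨𝒮, h𝒮, h𝒮B, hx𝒮, h𝒮G⟩ := (hG G hG𝒢).exists_traces hxG hxB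
  have h𝒮A : 𝒮 ⊆ {S | S ⊆ A ∧ #S ≤ κ} := fun S hS =>
    ⟨(h𝒮B S hS).trans hBA, (mk_le_mk_of_subset (h𝒮B S hS)).trans hB⟩
  exact ⟨⟨𝒮, h𝒮A, h𝒮⟩, hx𝒮, G, hG𝒢, h𝒮G⟩

end Topology

/-- Lemma 3.4. -/
theorem stmt9 {X : Type u} [TopologicalSpace X] (D : Set X) (κ : Cardinal.{u})
    (hκ : ℵ₀ ≤ κ) (hwt : wt X ≤ κ) (𝒢 : Set (Set X))
    (hG : ∀ G ∈ 𝒢, GcSet κ G) (hcov : closure D ⊆ ⋃₀ 𝒢) :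
    ∃ 𝒢' ⊆ 𝒢, #𝒢' ≤ #D ^ κ ∧ closure D ⊆ ⋃₀ 𝒢' := by
  have hDν : #D ≤ #D ^ κ := self_le_power _ (one_le_aleph0.trans hκ)
  rcases D.finite_or_infinite with hfin | hinf
  · obtain ⟨𝒢', h𝒢'𝒢, h𝒢', hcover⟩ := hfin.exists_subfamily_covering_closure
      (fun G hG𝒢 => (hG G hG𝒢).isClosed) (subset_closure.trans hcov)
    exact ⟨𝒢', h𝒢'𝒢, h𝒢'.trans hDν, hcover⟩
  have hD : ℵ₀ ≤ #D := infinite_iff.1 hinf.to_subtype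
  have hν : ℵ₀ ≤ #D ^ κ := hD.trans hDν
  have hνκ : (#D ^ κ) ^ κ = #D ^ κ := by rw [← power_mul, mul_eq_self hκ]
  obtain ⟨𝒞, hw⟩ := exists_isWtWitness_of_wt_le hwt
  obtain ⟨D', hDD', hsat, hD'⟩ := hw.exists_saturated_superset hκ D
  have hD'ν : #D' ≤ #D ^ κ :=
    hD'.trans (max_le hDν (power_le_power_right (ofNat_le_aleph0.trans hD)))
  obtain ⟨𝒢', h𝒢'𝒢, h𝒢', hcover⟩ := hw.exists_subfamily_covering hsat (closure_mono hDD') hG hcov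
  exact ⟨𝒢', h𝒢'𝒢, h𝒢'.trans (mk_setOf_subset_mk_le_le
    (mk_setOf_subset_mk_le_le hD'ν hν hνκ) hν hνκ), hcover⟩
end
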